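/- arXiv:2412.02031 — 4 statements merged into one kernel-verified Lean document; each statement's English description precedes it below -/
import Mathlib

section
/- Let t ≥ 1 be an integer, p ∈ ℕ (possibly 0), and a, b ∈ ℝ with ab > 0; set q = a/b. If p + t is odd, then (sign(b)/p!)·b^{p+1}·∫_{−∞}^{∞} x^p · Li_t(−e^{ax})/(1 + e^{bx}) dx = ((−1)^{p+1}/q^{p+1})·η(p+t+1) − 2·∑_{j=0}^{⌊t/2⌋} q^{t−2j} · C(p+t−2j, p) · η(p+t+1−2j) · η(2j), where C(n,k) denotes the binomial coefficient. -/
open MeasureTheory Filter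

/-- Dirichlet eta function at natural arguments: `η(0)=1/2`, `η(1)=log 2`,
and for `s ≥ 2` the (absolutely convergent) series `∑ (-1)^{n+1}/n^s`. -/
noncomputable def dEta (s : ℕ) : ℝ :=
  if s = 0 then 1/2
  else if s = 1 then Real.log 2
  else ∑' n : ℕ, (-1 : ℝ)^n / ((n : ℝ)+1)^s

/-- Riemann zeta at natural arguments `s ≥ 2`: `∑ 1/n^s`. -/
noncomputable def rZeta (s : ℕ) : ℝ := ∑' n : ℕ, 1 / ((n : ℝ)+1)^s

/-- `negLi t u = Li_t(-u)` for `t ≥ 1`, `u > 0`, via the Fermi–Dirac integral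
representation `Li_t(-u) = -(1/(t-1)!) ∫_0^∞ s^{t-1}/(u⁻¹ e^s + 1) ds`. -/
noncomputable def negLi (t : ℕ) (u : ℝ) : ℝ :=
  -(1 / ((t-1).factorial : ℝ)) * ∫ s in Set.Ioi (0:ℝ), s^(t-1) / (u⁻¹ * Real.exp s + 1)

/-- Extended harmonic number `H_λ^{(p)} = ∑_{j=1}^∞ (1/j^p - 1/(j+λ)^p)`. -/
noncomputable def Hext (p : ℕ) (lam : ℝ) : ℝ :=
  ∑' j : ℕ, (1/((j:ℝ)+1)^p - 1/(((j:ℝ)+1)+lam)^p)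

/-- Alternating linear Euler sum `S^{+-}_{p,t}(r) = ∑_{n=1}^∞ (-1)^{n+1} H_{rn}^{(p)}/n^t`,
as a limit of partial sums. -/
noncomputable def eulerS (p t : ℕ) (r : ℝ) : ℝ :=
  limUnder atTop
    (fun N => ∑ n ∈ Finset.range N, (-1:ℝ)^n * Hext p (r*((n:ℝ)+1)) / ((n:ℝ)+1)^t)

/-!
Write `Li_t(-e^c) = -F_{t-1}(c)/(t-1)!` with the Fermi–Dirac integral
`F_k(c) = ∫₀^∞ s^k f(s - c) ds`, `f(y) = 1/(1 + e^y)`. Shifting by `z` and folding `(-z, 0]`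
onto `(0, z]` with `f(-y) = 1 - f(y)` gives the inversion formula
`Li_t(-e^z) + (-1)^t Li_t(-e^{-z}) = -2 ∑_j η(2j) z^{t-2j}/(t-2j)!`, where the moments
`∫₀^∞ y^m f(y) dy = m! η(m+1)` come from expanding `f` in a geometric series.

After the substitution `x ↦ x / b` the integral is `∫_ℝ x^p Li_t(-e^{qx}) f(x) dx` with
`q = a/b > 0`. Fold it onto `x > 0`, again with `f(-x) = 1 - f(x)`, and apply the inversion
formula at `z = qx`: since `p + t` is odd, the two terms `x^p Li_t(-e^{-qx}) f(x)` cancel. What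
remains are moments of `f` and `(-1)^p ∫₀^∞ x^p Li_t(-e^{-qx}) dx`, computed termwise from the
power series of `Li_t(-u)` for `0 < u < 1`.
-/

open Real Set Finset
open scoped Nat

theorem integral_pow_mul_exp_neg_mul_Ioi (n : ℕ) {c : ℝ} (hc : 0 < c) :
    ∫ x in Ioi 0, x ^ n * exp (-(c * x)) = n ! / c ^ (n + 1) := by
  have h := integral_rpow_mul_exp_neg_mul_Ioi (a := n + 1) (by positivity) hc
  simp only [add_sub_cancel_right, rpow_natCast] at h
  rw [h, Gamma_nat_eq_factorial, ← Nat.cast_add_one, rpow_natCast, one_div, inv_pow,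
    div_eq_inv_mul]

theorem integrableOn_pow_mul_exp_neg_mul_Ioi (n : ℕ) {c : ℝ} (hc : 0 < c) :
    IntegrableOn (fun x : ℝ => x ^ n * exp (-(c * x))) (Ioi 0) :=
  .of_integral_ne_zero (by rw [integral_pow_mul_exp_neg_mul_Ioi n hc]; positivity)

theorem hasSum_integral_pow_mul_of_hasSum_exp {k : ℕ} {a lam : ℕ → ℝ} {F : ℝ → ℝ}
    (hlam : ∀ m, 0 < lam m)
    (hF : ∀ x ∈ Ioi (0 : ℝ), HasSum (fun m => a m * exp (-(lam m * x))) (F x))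
    (hsum : Summable fun m => |a m| / lam m ^ (k + 1)) :
    HasSum (fun m => k ! * a m / lam m ^ (k + 1)) (∫ x in Ioi 0, x ^ k * F x) := by
  set G : ℕ → ℝ → ℝ := fun m x => a m * (x ^ k * exp (-(lam m * x)))
  have hG (m : ℕ) : IntegrableOn (G m) (Ioi 0) :=
    (integrableOn_pow_mul_exp_neg_mul_Ioi k (hlam m)).const_mul _
  have hGnorm (m : ℕ) : ∫ x in Ioi 0, ‖G m x‖ = k ! * (|a m| / lam m ^ (k + 1)) := by
    rw [setIntegral_congr_fun measurableSet_Ioi (g := fun x => |a m| * (x ^ k * exp (-(lam m * x))))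
      fun x (hx : 0 < x) => by simp [G, abs_of_pos hx], integral_const_mul,
      integral_pow_mul_exp_neg_mul_Ioi k (hlam m)]
    ring
  have hsum' : Summable fun m => ∫ x in Ioi 0, ‖G m x‖ := by
    simpa only [hGnorm] using hsum.mul_left (k ! : ℝ)
  have hterm (m : ℕ) : ∫ x in Ioi 0, G m x = k ! * a m / lam m ^ (k + 1) := by
    rw [integral_const_mul, integral_pow_mul_exp_neg_mul_Ioi k (hlam m)]
    ring
  have hpt : ∫ x in Ioi 0, ∑' m, G m x = ∫ x in Ioi 0, x ^ k * F x := by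
    refine setIntegral_congr_fun measurableSet_Ioi fun x hx => ?_
    rw [← (hF x hx).tsum_eq, ← tsum_mul_left]
    congr 1 with m
    ring
  simpa only [hterm, hpt] using hasSum_integral_of_summable_integral_norm hG hsum'

theorem setIntegral_Ioi_comp_add_right {E : Type*} [NormedAddCommGroup E] [NormedSpace ℝ E]
    (g : ℝ → E) (c d : ℝ) : ∫ x in Ioi c, g (x + d) = ∫ y in Ioi (c + d), g y := by
  have := (measurePreserving_add_right volume d).setIntegral_preimage_emb
    (measurableEmbedding_addRight d) g (Ioi (c + d))
  simpa [preimage_add_const_Ioi] using this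

theorem integral_eq_integral_Ioi_add_comp_neg {E : Type*} [NormedAddCommGroup E]
    [NormedSpace ℝ E] {f : ℝ → E} (h₁ : IntegrableOn f (Ioi 0))
    (h₂ : IntegrableOn (fun x => f (-x)) (Ioi 0)) :
    ∫ x, f x = ∫ x in Ioi 0, (f x + f (-x)) := by
  have hIic : IntegrableOn f (Iic 0) := by
    rw [← (Measure.measurePreserving_neg volume).integrableOn_comp_preimage
      (Homeomorph.neg ℝ).measurableEmbedding]
    simpa [Function.comp_def, integrableOn_Ici_iff_integrableOn_Ioi] using h₂
  rw [integral_add h₁ h₂, integral_comp_neg_Ioi, neg_zero, add_comm,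
    intervalIntegral.integral_Iic_add_Ioi hIic h₁]

theorem summable_one_div_succ_pow {s : ℕ} (hs : 2 ≤ s) :
    Summable fun m : ℕ => 1 / ((m : ℝ) + 1) ^ s := by
  simpa using (summable_nat_add_iff 1).mpr (summable_one_div_nat_pow.mpr (by omega : 1 < s))

theorem sum_range_one_add_neg_one_pow_mul {R : Type*} [CommRing R] (N : ℕ) (g : ℕ → R) :
    ∑ n ∈ range (N + 1), (1 + (-1) ^ n) * g n = 2 * ∑ j ∈ range (N / 2 + 1), g (2 * j) := by
  induction N with
  | zero => norm_num
  | succ N ih =>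
    rw [sum_range_succ, ih]
    rcases Nat.even_or_odd (N + 1) with ⟨j, hj⟩ | ⟨j, hj⟩
    · rw [show (N + 1) / 2 = N / 2 + 1 by omega, sum_range_succ _ (N / 2 + 1),
        Even.neg_one_pow ⟨j, hj⟩, show 2 * (N / 2 + 1) = N + 1 by omega]
      ring
    · rw [Odd.neg_one_pow ⟨j, hj⟩, show (N + 1) / 2 = N / 2 by omega]
      ring

theorem neg_one_pow_eq_neg_neg_one_pow_of_odd_add {R : Type*} [Ring R] {p t : ℕ}
    (hodd : Odd (p + t)) : (-1 : R) ^ t = -(-1) ^ p := by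
  rcases Nat.even_or_odd p with hp | hp
  · rw [hp.neg_one_pow, ((Nat.odd_add'.mp hodd).mpr hp).neg_one_pow]
  · rw [hp.neg_one_pow, ((Nat.odd_add.mp hodd).mp hp).neg_one_pow, neg_neg]

theorem dEta_eq_tsum {s : ℕ} (hs : 2 ≤ s) :
    dEta s = ∑' n : ℕ, (-1 : ℝ) ^ n / ((n : ℝ) + 1) ^ s := by
  rw [dEta, if_neg (by omega), if_neg (by omega)]

noncomputable def fermi (y : ℝ) : ℝ := (1 + exp y)⁻¹

theorem fermi_pos (y : ℝ) : 0 < fermi y := by unfold fermi; positivity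

theorem fermi_le_one (y : ℝ) : fermi y ≤ 1 :=
  inv_le_one_of_one_le₀ (by linarith [exp_pos y])

theorem fermi_le_exp_neg (y : ℝ) : fermi y ≤ exp (-y) := by
  rw [exp_neg]
  exact inv_anti₀ (exp_pos y) (by linarith)

@[fun_prop]
theorem continuous_fermi : Continuous fermi :=
  Continuous.inv₀ (by fun_prop) fun y => by positivity

theorem fermi_neg (y : ℝ) : fermi (-y) = 1 - fermi y := by
  have : 1 + exp y ≠ 0 := by positivity
  unfold fermi
  rw [exp_neg]
  field_simp
  ring

theorem hasSum_fermi {y : ℝ} (hy : 0 < y) :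
    HasSum (fun m : ℕ => (-1) ^ m * exp (-((m + 1) * y))) (fermi y) := by
  have hr : ‖-exp (-y)‖ < 1 := by
    rw [norm_neg, norm_of_nonneg (exp_pos _).le, exp_lt_one_iff]
    linarith
  have hterm : (fun m : ℕ => exp (-y) * (-exp (-y)) ^ m)
      = fun m : ℕ => (-1) ^ m * exp (-((m + 1) * y)) := by
    funext m
    rw [neg_pow, ← exp_nat_mul, mul_left_comm, ← exp_add]
    ring_nf
  have hsum : exp (-y) * (1 - -exp (-y))⁻¹ = fermi y := by
    have : 1 + exp y ≠ 0 := by positivity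
    unfold fermi
    rw [sub_neg_eq_add, exp_neg]
    field_simp
    ring
  simpa only [hterm, hsum] using (hasSum_geometric_of_norm_lt_one hr).mul_left (exp (-y))

theorem integral_pow_mul_fermi {k : ℕ} (hk : 1 ≤ k) :
    ∫ y in Ioi 0, y ^ k * fermi y = k ! * dEta (k + 1) := by
  have h := hasSum_integral_pow_mul_of_hasSum_exp (k := k) (a := fun m => (-1) ^ m)
    (lam := fun m => m + 1)
    (fun m => by positivity) (fun y hy => hasSum_fermi hy)
    (by simpa using summable_one_div_succ_pow (s := k + 1) (by omega))
  rw [← h.tsum_eq, dEta_eq_tsum (by omega), ← tsum_mul_left]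
  simp only [mul_div_assoc]

noncomputable def fermiDirac (k : ℕ) (c : ℝ) : ℝ := ∫ s in Ioi 0, s ^ k * fermi (s - c)

theorem pow_mul_fermi_sub_le (k : ℕ) (c : ℝ) {s : ℝ} (hs : 0 ≤ s) :
    s ^ k * fermi (s - c) ≤ exp c * (s ^ k * exp (-(1 * s))) :=
  calc s ^ k * fermi (s - c) ≤ s ^ k * exp (-(s - c)) := by gcongr; exact fermi_le_exp_neg _
    _ = exp c * (s ^ k * exp (-(1 * s))) := by rw [← mul_left_comm, ← exp_add]; ring_nf

theorem integrableOn_pow_mul_fermi_sub (k : ℕ) (c : ℝ) :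
    IntegrableOn (fun s => s ^ k * fermi (s - c)) (Ioi 0) := by
  refine ((integrableOn_pow_mul_exp_neg_mul_Ioi k one_pos).const_mul (exp c)).mono'
    (by fun_prop) ?_
  filter_upwards [ae_restrict_mem measurableSet_Ioi] with s (hs : 0 < s)
  rw [norm_of_nonneg (by have := fermi_pos (s - c); positivity)]
  exact pow_mul_fermi_sub_le k c hs.le

theorem fermiDirac_nonneg (k : ℕ) (c : ℝ) : 0 ≤ fermiDirac k c :=
  setIntegral_nonneg measurableSet_Ioi fun s (hs : 0 < s) => by
    have := fermi_pos (s - c); positivity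

theorem fermiDirac_le (k : ℕ) (c : ℝ) : fermiDirac k c ≤ exp c * k ! :=
  calc fermiDirac k c ≤ ∫ s in Ioi 0, exp c * (s ^ k * exp (-(1 * s))) :=
        setIntegral_mono_on (integrableOn_pow_mul_fermi_sub k c)
          ((integrableOn_pow_mul_exp_neg_mul_Ioi k one_pos).const_mul _) measurableSet_Ioi
          fun s hs => pow_mul_fermi_sub_le k c (le_of_lt hs)
    _ = exp c * k ! := by
        rw [integral_const_mul, integral_pow_mul_exp_neg_mul_Ioi k one_pos, one_pow, div_one]

theorem negLi_exp (t : ℕ) (c : ℝ) :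
    negLi t (exp c) = -(1 / ((t - 1)! : ℝ)) * fermiDirac (t - 1) c := by
  unfold negLi fermiDirac fermi
  congr 2 with s
  rw [exp_sub, div_eq_mul_inv, div_eq_inv_mul, add_comm]

@[fun_prop]
theorem measurable_negLi (t : ℕ) : Measurable (negLi t) := by
  unfold negLi
  refine measurable_const.mul (StronglyMeasurable.integral_prod_right'
    (f := fun x : ℝ × ℝ => x.2 ^ (t - 1) / (x.1⁻¹ * exp x.2 + 1)) ?_).measurable
  exact (by fun_prop : Measurable _).stronglyMeasurable

theorem abs_negLi_exp_le (t : ℕ) (c : ℝ) : |negLi t (exp c)| ≤ exp c := by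
  rw [negLi_exp, abs_mul, abs_neg, abs_of_pos (by positivity),
    abs_of_nonneg (fermiDirac_nonneg _ _),
    one_div, inv_mul_le_iff₀ (by positivity), mul_comm]
  exact fermiDirac_le _ _

theorem hasSum_negLi_exp {t : ℕ} (ht : 1 ≤ t) {c : ℝ} (hc : c < 0) :
    HasSum (fun m : ℕ => -((-1) ^ m * exp ((m + 1) * c) / ((m : ℝ) + 1) ^ t))
      (negLi t (exp c)) := by
  obtain ⟨k, rfl⟩ : ∃ k, t = k + 1 := ⟨t - 1, by omega⟩
  have hF (s : ℝ) (hs : s ∈ Ioi (0 : ℝ)) : HasSum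
      (fun m : ℕ => (-1) ^ m * exp ((m + 1) * c) * exp (-(((m : ℝ) + 1) * s)))
      (fermi (s - c)) := by
    convert hasSum_fermi (y := s - c) (by linarith [mem_Ioi.mp hs]) using 2 with m
    rw [mul_assoc, ← exp_add]
    ring_nf
  have hsum : Summable fun m : ℕ =>
      |(-1) ^ m * exp ((m + 1) * c)| / ((m : ℝ) + 1) ^ (k + 1) := by
    refine Summable.of_nonneg_of_le (fun m => div_nonneg (abs_nonneg _) (by positivity))
      (fun m => ?_)
      ((summable_geometric_of_lt_one (exp_pos c).le (exp_lt_one_iff.mpr hc)).mul_left (exp c))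
    rw [abs_mul, abs_pow, abs_neg, abs_one, one_pow, one_mul, abs_of_pos (exp_pos _),
      ← exp_nat_mul, ← exp_add]
    refine (div_le_self (exp_pos _).le
      (one_le_pow₀ (le_add_of_nonneg_left m.cast_nonneg))).trans_eq ?_
    ring_nf
  rw [negLi_exp, Nat.add_sub_cancel, fermiDirac]
  refine ((hasSum_integral_pow_mul_of_hasSum_exp (lam := fun m : ℕ => (m : ℝ) + 1)
    (fun m => by positivity) hF hsum).mul_left _).congr_fun fun m => ?_
  field_simp

theorem integrableOn_pow_mul_negLi_exp_neg_mul (p t : ℕ) {q : ℝ} (hq : 0 < q) :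
    IntegrableOn (fun x => x ^ p * negLi t (exp (-(q * x)))) (Ioi 0) := by
  refine (integrableOn_pow_mul_exp_neg_mul_Ioi p hq).mono' (by fun_prop) ?_
  filter_upwards [ae_restrict_mem measurableSet_Ioi] with x (hx : 0 < x)
  rw [norm_mul, norm_of_nonneg (by positivity), norm_eq_abs]
  exact mul_le_mul_of_nonneg_left (abs_negLi_exp_le t _) (by positivity)

theorem integral_pow_mul_negLi_exp_neg_mul {p t : ℕ} (ht : 1 ≤ t) {q : ℝ} (hq : 0 < q) :
    ∫ x in Ioi 0, x ^ p * negLi t (exp (-(q * x))) = -(p ! / q ^ (p + 1)) * dEta (p + t + 1) := by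
  have hF (x : ℝ) (hx : x ∈ Ioi (0 : ℝ)) : HasSum
      (fun m : ℕ => -((-1) ^ m / ((m : ℝ) + 1) ^ t) * exp (-(q * (m + 1) * x)))
      (negLi t (exp (-(q * x)))) := by
    refine (hasSum_negLi_exp ht (by nlinarith [mem_Ioi.mp hx])).congr_fun fun m => ?_
    ring_nf
  have hsum : Summable fun m : ℕ =>
      |-((-1) ^ m / ((m : ℝ) + 1) ^ t)| / (q * (m + 1)) ^ (p + 1) := by
    refine ((summable_one_div_succ_pow (s := p + t + 1) (by omega)).mul_left
      (1 / q ^ (p + 1))).congr fun m => ?_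
    rw [abs_neg, abs_div, abs_pow, abs_neg, abs_one, one_pow, abs_of_pos (by positivity), mul_pow]
    field_simp
    ring
  rw [← (hasSum_integral_pow_mul_of_hasSum_exp (fun m => by positivity) hF hsum).tsum_eq,
    dEta_eq_tsum (by omega), ← tsum_mul_left]
  congr 1 with m
  rw [mul_pow]
  field_simp
  ring

theorem integrableOn_pow_mul_fermi (k : ℕ) : IntegrableOn (fun y => y ^ k * fermi y) (Ioi 0) := by
  simpa using integrableOn_pow_mul_fermi_sub k 0

theorem add_pow_mul_fermi (k : ℕ) (w z y : ℝ) :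
    (w * y + z) ^ k * fermi y
      = ∑ i ∈ range (k + 1), w ^ i * z ^ (k - i) * k.choose i * (y ^ i * fermi y) := by
  rw [add_pow, sum_mul]
  refine sum_congr rfl fun i _ => ?_
  ring

theorem integrableOn_add_pow_mul_fermi (k : ℕ) (w z : ℝ) :
    IntegrableOn (fun y => (w * y + z) ^ k * fermi y) (Ioi 0) := by
  simp_rw [add_pow_mul_fermi]
  exact integrable_finsetSum _ fun i _ => (integrableOn_pow_mul_fermi i).const_mul _

theorem integral_add_pow_mul_fermi (k : ℕ) (w z : ℝ) :
    ∫ y in Ioi 0, (w * y + z) ^ k * fermi y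
      = ∑ i ∈ range (k + 1),
          w ^ i * z ^ (k - i) * k.choose i * ∫ y in Ioi 0, y ^ i * fermi y := by
  simp_rw [add_pow_mul_fermi]
  rw [integral_finsetSum _ fun i _ => (integrableOn_pow_mul_fermi i).const_mul _]
  simp_rw [integral_const_mul]

theorem integral_Ioc_neg_add_pow_mul_fermi (k : ℕ) {z : ℝ} (hz : 0 ≤ z) :
    ∫ y in Ioc (-z) 0, (y + z) ^ k * fermi y
      = z ^ (k + 1) / (k + 1) - ∫ y in Ioc 0 z, (z - y) ^ k * fermi y := by
  rw [← intervalIntegral.integral_of_le (by linarith), ← intervalIntegral.integral_of_le hz,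
    ← neg_zero, ← intervalIntegral.integral_comp_neg, neg_zero]
  have hpt (y : ℝ) : (-y + z) ^ k * fermi (-y) = (z - y) ^ k - (z - y) ^ k * fermi y := by
    rw [fermi_neg]
    ring
  simp_rw [hpt]
  rw [intervalIntegral.integral_sub
    ((by fun_prop : Continuous fun y => (z - y) ^ k).intervalIntegrable _ _)
    ((by fun_prop : Continuous fun y => (z - y) ^ k * fermi y).intervalIntegrable _ _),
    intervalIntegral.integral_comp_sub_left (fun y => y ^ k) z]
  simp [integral_pow]

theorem fermiDirac_sub_neg_one_pow_mul_fermiDirac_neg (k : ℕ) {z : ℝ} (hz : 0 ≤ z) :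
    fermiDirac k z - (-1) ^ k * fermiDirac k (-z)
      = z ^ (k + 1) / (k + 1) + (∫ y in Ioi 0, (y + z) ^ k * fermi y)
        - ∫ y in Ioi 0, (z - y) ^ k * fermi y := by
  set gp : ℝ → ℝ := fun y => (y + z) ^ k * fermi y
  set gm : ℝ → ℝ := fun y => (z - y) ^ k * fermi y
  have hgp : IntegrableOn gp (Ioi 0) := by simpa using integrableOn_add_pow_mul_fermi k 1 z
  have hgm : IntegrableOn gm (Ioi 0) := by
    simpa [neg_add_eq_sub] using integrableOn_add_pow_mul_fermi k (-1) z
  have h₁ : fermiDirac k z = (∫ y in Ioc (-z) 0, gp y) + ∫ y in Ioi 0, gp y := by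
    have hshift : fermiDirac k z = ∫ y in Ioi (-z), gp y := by
      rw [← zero_add (-z), ← setIntegral_Ioi_comp_add_right]
      simp [fermiDirac, gp, sub_eq_add_neg]
    rw [hshift, ← Ioc_union_Ioi_eq_Ioi (by linarith : -z ≤ 0)]
    exact setIntegral_union (Ioc_disjoint_Ioi le_rfl) measurableSet_Ioi
      (by fun_prop : Continuous gp).integrableOn_Ioc hgp
  have h₂ : (-1) ^ k * fermiDirac k (-z) = ∫ y in Ioi z, gm y := by
    rw [← zero_add z, ← setIntegral_Ioi_comp_add_right, fermiDirac, ← integral_const_mul]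
    refine setIntegral_congr_fun measurableSet_Ioi fun s _ => ?_
    simp only [gm, sub_neg_eq_add, zero_add]
    rw [show z - (s + z) = -1 * s by ring, mul_pow]
    ring
  have h₃ : ∫ y in Ioi 0, gm y = (∫ y in Ioc 0 z, gm y) + ∫ y in Ioi z, gm y := by
    rw [← Ioc_union_Ioi_eq_Ioi hz]
    exact setIntegral_union (Ioc_disjoint_Ioi le_rfl) measurableSet_Ioi
      (by fun_prop : Continuous gm).integrableOn_Ioc (hgm.mono_set (Ioi_subset_Ioi hz))
  linear_combination h₁ - h₂ + h₃ + integral_Ioc_neg_add_pow_mul_fermi k hz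

theorem integral_add_pow_mul_fermi_sub_integral_sub_pow_mul_fermi (k : ℕ) (z : ℝ) :
    (∫ y in Ioi 0, (y + z) ^ k * fermi y) - ∫ y in Ioi 0, (z - y) ^ k * fermi y
      = ∑ i ∈ range (k + 1),
          (1 - (-1) ^ i) * k.choose i * i ! * dEta (i + 1) * z ^ (k - i) := by
  have hplus := integral_add_pow_mul_fermi k 1 z
  have hminus := integral_add_pow_mul_fermi k (-1) z
  simp only [one_mul, one_pow] at hplus
  simp only [neg_one_mul, neg_add_eq_sub] at hminus
  rw [hplus, hminus, ← sum_sub_distrib]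
  refine sum_congr rfl fun i _ => ?_
  rcases Nat.eq_zero_or_pos i with rfl | hi
  · simp
  rw [integral_pow_mul_fermi hi]
  ring

theorem negLi_exp_add_neg_one_pow_mul_negLi_exp_neg {t : ℕ} (ht : 1 ≤ t) {z : ℝ}
    (hz : 0 ≤ z) :
    negLi t (exp z) + (-1) ^ t * negLi t (exp (-z)) =
      -2 * ∑ j ∈ range (t / 2 + 1), dEta (2 * j) * z ^ (t - 2 * j) / ((t - 2 * j)! : ℝ) := by
  obtain ⟨k, rfl⟩ : ∃ k, t = k + 1 := ⟨t - 1, by omega⟩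
  set g : ℕ → ℝ := fun n => dEta n * z ^ (k + 1 - n) / ((k + 1 - n)! : ℝ)
  have hterm (i : ℕ) (hi : i ∈ range (k + 1)) :
      1 / (k ! : ℝ) * ((1 - (-1) ^ i) * k.choose i * i ! * dEta (i + 1) * z ^ (k - i))
        = (1 + (-1) ^ (i + 1)) * g (i + 1) := by
    have hik : i ≤ k := Nat.lt_succ_iff.mp (mem_range.mp hi)
    simp only [g, Nat.cast_choose ℝ hik, show k + 1 - (i + 1) = k - i by omega, pow_succ]
    field_simp
    ring
  have hfac : ((k + 1)! : ℝ) = (k + 1) * k ! := by push_cast [Nat.factorial_succ]; ring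
  calc negLi (k + 1) (exp z) + (-1) ^ (k + 1) * negLi (k + 1) (exp (-z))
      = -(1 / (k ! : ℝ)) * (fermiDirac k z - (-1) ^ k * fermiDirac k (-z)) := by
        rw [negLi_exp, negLi_exp, Nat.add_sub_cancel]
        ring
    _ = -(1 / (k ! : ℝ) * (z ^ (k + 1) / (k + 1)) + ∑ i ∈ range (k + 1), 1 / (k ! : ℝ) *
          ((1 - (-1) ^ i) * k.choose i * i ! * dEta (i + 1) * z ^ (k - i))) := by
        rw [fermiDirac_sub_neg_one_pow_mul_fermiDirac_neg k hz, add_sub_assoc,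
          integral_add_pow_mul_fermi_sub_integral_sub_pow_mul_fermi, ← mul_sum]
        ring
    _ = -(∑ i ∈ range (k + 1), (1 + (-1) ^ (i + 1)) * g (i + 1) + (1 + (-1) ^ 0) * g 0) := by
        rw [sum_congr rfl hterm]
        simp only [g, dEta, if_pos, Nat.sub_zero, hfac]
        field_simp
        ring
    _ = -∑ n ∈ range (k + 1 + 1), (1 + (-1) ^ n) * g n := by rw [sum_range_succ' _ (k + 1)]
    _ = _ := by
        rw [sum_range_one_add_neg_one_pow_mul]
        ring

theorem pow_mul_negLi_exp_mul_mul_fermi_eq {t p : ℕ} (ht : 1 ≤ t) (hodd : Odd (p + t))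
    {q x : ℝ} (hqx : 0 ≤ q * x) :
    x ^ p * negLi t (exp (q * x)) * fermi x
      = (-1) ^ p * (x ^ p * negLi t (exp (-(q * x))) * fermi x)
        - 2 * ∑ j ∈ range (t / 2 + 1), dEta (2 * j) * q ^ (t - 2 * j) / ((t - 2 * j)! : ℝ)
          * (x ^ (p + (t - 2 * j)) * fermi x) := by
  have hsum : x ^ p * (∑ j ∈ range (t / 2 + 1),
      dEta (2 * j) * (q * x) ^ (t - 2 * j) / ((t - 2 * j)! : ℝ)) * fermi x
      = ∑ j ∈ range (t / 2 + 1), dEta (2 * j) * q ^ (t - 2 * j) / ((t - 2 * j)! : ℝ)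
          * (x ^ (p + (t - 2 * j)) * fermi x) := by
    simp only [mul_sum, sum_mul]
    refine sum_congr rfl fun j _ => ?_
    rw [mul_pow, pow_add]
    ring
  rw [eq_sub_of_add_eq (negLi_exp_add_neg_one_pow_mul_negLi_exp_neg ht hqx),
    neg_one_pow_eq_neg_neg_one_pow_of_odd_add hodd, ← hsum]
  ring

theorem integral_pow_mul_negLi_exp_mul_mul_fermi {t p : ℕ} (ht : 1 ≤ t) {q : ℝ} (hq : 0 < q)
    (hodd : Odd (p + t)) :
    ∫ x, x ^ p * negLi t (exp (q * x)) * fermi x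
      = (-1) ^ p * (-(p ! / q ^ (p + 1)) * dEta (p + t + 1))
        - 2 * ∑ j ∈ range (t / 2 + 1), dEta (2 * j) * q ^ (t - 2 * j) / ((t - 2 * j)! : ℝ)
          * ((p + (t - 2 * j))! * dEta (p + (t - 2 * j) + 1)) := by
  set c : ℕ → ℝ := fun j => dEta (2 * j) * q ^ (t - 2 * j) / ((t - 2 * j)! : ℝ)
  set L : ℝ → ℝ := fun x => x ^ p * negLi t (exp (-(q * x)))
  set S : ℝ → ℝ := fun x =>
    ∑ j ∈ range (t / 2 + 1), c j * (x ^ (p + (t - 2 * j)) * fermi x)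
  have hpos (x : ℝ) (hx : 0 < x) : x ^ p * negLi t (exp (q * x)) * fermi x
      = (-1) ^ p * (L x * fermi x) - 2 * S x :=
    pow_mul_negLi_exp_mul_mul_fermi_eq ht hodd (by positivity)
  have hneg (x : ℝ) : (-x) ^ p * negLi t (exp (q * -x)) * fermi (-x)
      = (-1) ^ p * L x - (-1) ^ p * (L x * fermi x) := by
    simp only [L, fermi_neg, mul_neg]
    rw [neg_pow x]
    ring
  have hL : IntegrableOn L (Ioi 0) := integrableOn_pow_mul_negLi_exp_neg_mul p t hq
  have hLf : IntegrableOn (fun x => L x * fermi x) (Ioi 0) :=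
    hL.mul_bdd continuous_fermi.aestronglyMeasurable
      (ae_of_all _ fun x => by rw [norm_of_nonneg (fermi_pos x).le]; exact fermi_le_one x)
  have hS : IntegrableOn S (Ioi 0) :=
    integrable_finsetSum _ fun j _ => (integrableOn_pow_mul_fermi _).const_mul _
  rw [integral_eq_integral_Ioi_add_comp_neg
    (IntegrableOn.congr_fun ((hLf.const_mul _).sub (hS.const_mul 2))
      (fun x hx => (hpos x hx).symm) measurableSet_Ioi)
    (IntegrableOn.congr_fun ((hL.const_mul _).sub (hLf.const_mul _))
      (fun x _ => (hneg x).symm) measurableSet_Ioi)]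
  have hsum (x : ℝ) (hx : 0 < x) : x ^ p * negLi t (exp (q * x)) * fermi x
      + (-x) ^ p * negLi t (exp (q * -x)) * fermi (-x) = (-1) ^ p * L x - 2 * S x := by
    rw [hpos x hx, hneg x]
    ring
  have hterm (j : ℕ) (hj : j ∈ range (t / 2 + 1)) :
      ∫ x in Ioi 0, c j * (x ^ (p + (t - 2 * j)) * fermi x)
        = c j * ((p + (t - 2 * j))! * dEta (p + (t - 2 * j) + 1)) := by
    obtain ⟨w, hw⟩ := hodd
    have := mem_range.mp hj
    rw [integral_const_mul, integral_pow_mul_fermi (by omega)]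
  rw [setIntegral_congr_fun measurableSet_Ioi hsum, integral_sub (hL.const_mul _) (hS.const_mul _),
    integral_const_mul, integral_const_mul, integral_pow_mul_negLi_exp_neg_mul ht hq,
    integral_finsetSum _ fun j _ => (integrableOn_pow_mul_fermi _).const_mul _,
    sum_congr rfl hterm]

theorem one_div_factorial_mul_integral_pow_mul_negLi_exp_mul_mul_fermi {t p : ℕ} (ht : 1 ≤ t)
    {q : ℝ} (hq : 0 < q) (hodd : Odd (p + t)) :
    1 / (p ! : ℝ) * ∫ x, x ^ p * negLi t (exp (q * x)) * fermi x
      = ((-1) ^ (p + 1) / q ^ (p + 1)) * dEta (p + t + 1)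
        - 2 * ∑ j ∈ range (t / 2 + 1),
          q ^ (t - 2 * j) * ((p + t - 2 * j).choose p : ℝ) * dEta (p + t + 1 - 2 * j)
            * dEta (2 * j) := by
  have hterm (j : ℕ) (hj : j ∈ range (t / 2 + 1)) :
      dEta (2 * j) * q ^ (t - 2 * j) / ((t - 2 * j)! : ℝ)
          * ((p + (t - 2 * j))! * dEta (p + (t - 2 * j) + 1))
        = p ! * (q ^ (t - 2 * j) * ((p + t - 2 * j).choose p : ℝ) * dEta (p + t + 1 - 2 * j)
          * dEta (2 * j)) := by
    have h2j : 2 * j ≤ t := by have := mem_range.mp hj; omega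
    rw [show p + t - 2 * j = p + (t - 2 * j) by omega,
      show p + t + 1 - 2 * j = p + (t - 2 * j) + 1 by omega,
      Nat.cast_choose ℝ (Nat.le_add_right p _), Nat.add_sub_cancel_left]
    field_simp
  rw [integral_pow_mul_negLi_exp_mul_mul_fermi ht hq hodd, sum_congr rfl hterm, ← mul_sum]
  field_simp
  ring

theorem stmt0 (t p : ℕ) (ht : 1 ≤ t) (a b : ℝ) (hab : a * b > 0)
    (hodd : Odd (p + t)) :
    (Real.sign b / (p.factorial : ℝ)) * b^(p+1) *
      (∫ x : ℝ, x^p * negLi t (Real.exp (a*x)) / (1 + Real.exp (b*x))) =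
    ((-1:ℝ)^(p+1) / (a/b)^(p+1)) * dEta (p+t+1)
      - 2 * ∑ j ∈ Finset.range (t/2 + 1),
          (a/b)^(t-2*j) * ((p+t-2*j).choose p : ℝ) * dEta (p+t+1-2*j) * dEta (2*j) := by
  have hb : b ≠ 0 := by rintro rfl; simp at hab
  have hq : 0 < a / b := by
    rcases mul_pos_iff.mp hab with ⟨ha, hb⟩ | ⟨ha, hb⟩
    · exact div_pos ha hb
    · exact div_pos_of_neg_of_neg ha hb
  have hscale : ∫ x, x ^ p * negLi t (exp (a * x)) / (1 + exp (b * x))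
      = |b⁻¹| * ((b⁻¹) ^ p * ∫ y, y ^ p * negLi t (exp (a / b * y)) * fermi y) := by
    rw [← integral_const_mul, ← smul_eq_mul, ← Measure.integral_comp_mul_left]
    congr 1 with x
    rw [show a / b * (b * x) = a * x by field_simp, fermi, mul_pow, inv_pow]
    field_simp
  have hsign : Real.sign b * b ^ (p + 1) * (|b⁻¹| * (b⁻¹) ^ p) = 1 := by
    rw [abs_inv, pow_succ, inv_pow]
    rcases hb.lt_or_gt with hb' | hb'
    · rw [Real.sign_of_neg hb', abs_of_neg hb']
      field_simp
    · rw [Real.sign_of_pos hb', abs_of_pos hb']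
      field_simp
  rw [hscale, ← one_div_factorial_mul_integral_pow_mul_negLi_exp_mul_mul_fermi ht hq hodd,
    ← hsign]
  ring
end

section
/- Let a ∈ ℝ with 0 < |a| < 1. Then ∫_{0}^{∞} y^{a} · (−log(1+y)) / (y·(1+y)) dy = (π / sin(aπ)) · ∑_{j=1}^{∞} ( 1/j − 1/(j−a) ), where log is the real natural logarithm (the right-hand side equals π·csc(aπ)·(γ + ψ(1−a)) with γ the Euler–Mascheroni constant and ψ the digamma function). -/
/-!
Since `log (1 + y) / y = ∫₀¹ dt / (1 + t y)` and the integrand is positive, Fubini turns the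
integral into `-∫₀¹ ∫₀^∞ y ^ a / ((1 + y) (1 + t y)) dy dt`. Partial fractions in `y` and the Beta
integral `∫₀^∞ y ^ (s - 1) / (1 + t y) dy = t ^ (-s) π / sin (π s)` (for `0 < s < 1`) give the
inner integral `-(π / sin (π a)) (1 - t ^ (-a)) / (1 - t)`. Finally, expanding `1 / (1 - t)` as a
geometric series, `∫₀¹ (1 - t ^ r) / (1 - t) dt = ∑ (1 / j - 1 / (j + r))`.
-/

open MeasureTheory Filter

section
open Real Set

theorem integral_rpow_sub_one_mul_one_sub_rpow_neg {s : ℝ} (hs0 : 0 < s) (hs1 : s < 1) :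
    ∫ x in (0:ℝ)..1, x ^ (s - 1) * (1 - x) ^ (-s) = π / sin (π * s) := by
  have hbeta : Complex.betaIntegral s (1 - s) =
      ((∫ x in (0:ℝ)..1, x ^ (s - 1) * (1 - x) ^ (-s) : ℝ) : ℂ) := by
    rw [Complex.betaIntegral, ← intervalIntegral.integral_ofReal]
    refine intervalIntegral.integral_congr fun x hx => ?_
    rw [uIcc_of_le zero_le_one] at hx
    push_cast
    rw [Complex.ofReal_cpow hx.1, Complex.ofReal_cpow (sub_nonneg.2 hx.2)]
    push_cast
    ring_nf
  have hGamma := Complex.Gamma_mul_Gamma_eq_betaIntegral (s := s) (t := 1 - s)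
    (by simpa using hs0) (by simpa using hs1)
  rw [add_sub_cancel, Complex.Gamma_one, one_mul, hbeta, ← Complex.ofReal_one,
    ← Complex.ofReal_sub, Complex.Gamma_ofReal, Complex.Gamma_ofReal,
    ← Complex.ofReal_mul, Complex.ofReal_inj] at hGamma
  rw [← hGamma, Real.Gamma_mul_Gamma_one_sub]

theorem integrableOn_Ioi_zero_of_le_rpow {f : ℝ → ℝ} {b c C : ℝ}
    (hf : AEStronglyMeasurable f (volume.restrict (Ioi 0))) (hb : -1 < b) (hc : c < -1)
    (h_le_one : ∀ y ∈ Ioc (0:ℝ) 1, ‖f y‖ ≤ C * y ^ b)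
    (h_one_lt : ∀ y ∈ Ioi (1:ℝ), ‖f y‖ ≤ C * y ^ c) :
    IntegrableOn f (Ioi 0) := by
  rw [← Ioc_union_Ioi_eq_Ioi zero_le_one]
  refine IntegrableOn.union ?_ ?_
  · refine (((intervalIntegral.intervalIntegrable_rpow' hb).1).const_mul C).mono'
      (hf.mono_set Ioc_subset_Ioi_self) ?_
    filter_upwards [ae_restrict_mem measurableSet_Ioc] with y hy using h_le_one y hy
  · refine ((integrableOn_Ioi_rpow_of_lt hc one_pos).const_mul C).mono'
      (hf.mono_set (Ioi_subset_Ioi zero_le_one)) ?_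
    filter_upwards [ae_restrict_mem measurableSet_Ioi] with y hy using h_one_lt y hy

theorem integrableOn_rpow_div_one_add_mul {s t : ℝ} (hs0 : 0 < s) (hs1 : s < 1) (ht : 0 < t) :
    IntegrableOn (fun y : ℝ => y ^ (s - 1) / (1 + t * y)) (Ioi 0) := by
  refine integrableOn_Ioi_zero_of_le_rpow (b := s - 1) (C := max 1 t⁻¹)
    (by fun_prop : Measurable _).aestronglyMeasurable (by linarith)
    (by linarith : s - 2 < -1) (fun y hy => ?_) (fun y hy => ?_)
  all_goals
    have hy0 : 0 < y := by simp only [mem_Ioc, mem_Ioi] at hy; linarith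
    rw [Real.norm_of_nonneg (by positivity)]
  · calc y ^ (s - 1) / (1 + t * y) ≤ y ^ (s - 1) := div_le_self (by positivity) (by nlinarith)
      _ ≤ max 1 t⁻¹ * y ^ (s - 1) := le_mul_of_one_le_left (by positivity) (le_max_left _ _)
  · calc y ^ (s - 1) / (1 + t * y) ≤ y ^ (s - 1) / (t * y) :=
          div_le_div_of_nonneg_left (by positivity) (by positivity) (by linarith)
      _ = t⁻¹ * y ^ (s - 2) := by
          rw [show s - 1 = (s - 2) + 1 by ring, Real.rpow_add_one hy0.ne']
          field_simp
      _ ≤ max 1 t⁻¹ * y ^ (s - 2) := by gcongr; exact le_max_right _ _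

theorem integral_rpow_div_one_add {s : ℝ} (hs0 : 0 < s) (hs1 : s < 1) :
    ∫ y in Ioi (0:ℝ), y ^ (s - 1) / (1 + y) = π / sin (π * s) := by
  set φ : ℝ → ℝ := fun x => x / (1 - x)
  have himage : φ '' Ioo 0 1 = Ioi 0 := by
    ext y
    constructor
    · rintro ⟨x, hx, rfl⟩
      exact div_pos hx.1 (sub_pos.2 hx.2)
    · intro (hy : 0 < y)
      refine ⟨y / (1 + y), ⟨by positivity, (div_lt_one (by positivity)).2 (by linarith)⟩, ?_⟩
      change y / (1 + y) / (1 - y / (1 + y)) = y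
      field_simp
      ring
  have hderiv : ∀ x ∈ Ioo (0:ℝ) 1, HasDerivWithinAt φ ((1 - x) ^ 2)⁻¹ (Ioo 0 1) x := by
    intro x hx
    have h : HasDerivAt φ ((1 * (1 - x) - x * -1) / (1 - x) ^ 2) x :=
      (hasDerivAt_id' x).div ((hasDerivAt_id' x).const_sub 1) (sub_pos.2 hx.2).ne'
    exact h.hasDerivWithinAt.congr_deriv (by ring)
  have hinj : InjOn φ (Ioo 0 1) := by
    intro x hx x' hx' h
    simp only [φ] at h
    rw [div_eq_div_iff (sub_pos.2 hx.2).ne' (sub_pos.2 hx'.2).ne'] at h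
    nlinarith
  have hintegrand : ∀ x ∈ Ioo (0:ℝ) 1,
      |((1 - x) ^ 2)⁻¹| • (φ x ^ (s - 1) / (1 + φ x)) = x ^ (s - 1) * (1 - x) ^ (-s) := by
    intro x ⟨hx0, hx1⟩
    have h1x : 0 < 1 - x := sub_pos.2 hx1
    have hsum : 1 + φ x = (1 - x)⁻¹ := by simp only [φ]; field_simp; ring
    have hpow : (1 - x) ^ s ≠ 0 := (Real.rpow_pos_of_pos h1x s).ne'
    rw [hsum, smul_eq_mul, abs_of_pos (by positivity), Real.div_rpow hx0.le h1x.le,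
      Real.rpow_sub_one h1x.ne', Real.rpow_neg h1x.le]
    field_simp
  rw [← himage, integral_image_eq_integral_abs_deriv_smul measurableSet_Ioo hderiv hinj,
    setIntegral_congr_fun measurableSet_Ioo hintegrand, ← integral_Ioc_eq_integral_Ioo,
    ← intervalIntegral.integral_of_le zero_le_one,
    integral_rpow_sub_one_mul_one_sub_rpow_neg hs0 hs1]

theorem integral_rpow_div_one_add_mul {s t : ℝ} (hs0 : 0 < s) (hs1 : s < 1) (ht : 0 < t) :
    ∫ y in Ioi (0:ℝ), y ^ (s - 1) / (1 + t * y) = t ^ (-s) * (π / sin (π * s)) := by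
  have hscale := integral_comp_mul_left_Ioi (fun u : ℝ => u ^ (s - 1) / (1 + u)) 0 ht
  rw [mul_zero, integral_rpow_div_one_add hs0 hs1, smul_eq_mul] at hscale
  have hpull : ∀ y ∈ Ioi (0:ℝ),
      (t * y) ^ (s - 1) / (1 + t * y) = t ^ (s - 1) * (y ^ (s - 1) / (1 + t * y)) := by
    intro y (hy : 0 < y)
    rw [Real.mul_rpow ht.le hy.le, mul_div_assoc]
  rw [setIntegral_congr_fun measurableSet_Ioi hpull, integral_const_mul] at hscale
  rw [← mul_right_inj' (Real.rpow_pos_of_pos ht (s - 1)).ne', hscale, ← mul_assoc,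
    ← Real.rpow_add ht, show s - 1 + -s = -1 by ring, Real.rpow_neg_one]

theorem integral_sub_rpow_div_one_add_mul {s : ℝ} (hs0 : 0 < s) (hs1 : s < 1) {p q : ℝ}
    (hp : 0 < p) (hq : 0 < q) (α β : ℝ) :
    ∫ y in Ioi (0:ℝ), (α * (y ^ (s - 1) / (1 + p * y)) - β * (y ^ (s - 1) / (1 + q * y))) =
      (α * p ^ (-s) - β * q ^ (-s)) * (π / sin (π * s)) := by
  rw [integral_sub ((integrableOn_rpow_div_one_add_mul hs0 hs1 hp).const_mul α)
      ((integrableOn_rpow_div_one_add_mul hs0 hs1 hq).const_mul β),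
    integral_const_mul, integral_const_mul, integral_rpow_div_one_add_mul hs0 hs1 hp,
    integral_rpow_div_one_add_mul hs0 hs1 hq]
  ring

theorem integrableOn_rpow_div_one_add_mul_one_add_mul {a t : ℝ} (ha : |a| < 1) (ht : 0 < t) :
    IntegrableOn (fun y : ℝ => y ^ a / ((1 + y) * (1 + t * y))) (Ioi 0) := by
  refine integrableOn_Ioi_zero_of_le_rpow (b := a) (C := max 1 t⁻¹)
    (by fun_prop : Measurable _).aestronglyMeasurable (neg_lt_of_abs_lt ha)
    (by linarith [lt_of_abs_lt ha] : a - 2 < -1) (fun y hy => ?_) (fun y hy => ?_)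
  all_goals
    have hy0 : 0 < y := by simp only [mem_Ioc, mem_Ioi] at hy; linarith
    rw [Real.norm_of_nonneg (by positivity)]
  · calc y ^ a / ((1 + y) * (1 + t * y)) ≤ y ^ a :=
          div_le_self (by positivity) (one_le_mul_of_one_le_of_one_le (by linarith) (by nlinarith))
      _ ≤ max 1 t⁻¹ * y ^ a := le_mul_of_one_le_left (by positivity) (le_max_left _ _)
  · calc y ^ a / ((1 + y) * (1 + t * y)) ≤ y ^ a / (y * (t * y)) :=
          div_le_div_of_nonneg_left (by positivity) (by positivity)
            (mul_le_mul (by linarith) (by linarith) (by positivity) (by positivity))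
      _ = t⁻¹ * y ^ (a - 2) := by
          rw [Real.rpow_sub hy0, Real.rpow_two]
          field_simp
      _ ≤ max 1 t⁻¹ * y ^ (a - 2) := by gcongr; exact le_max_right _ _

theorem integral_rpow_div_one_add_mul_one_add_mul {a t : ℝ} (ha0 : a ≠ 0) (ha1 : |a| < 1)
    (ht0 : 0 < t) (ht1 : t < 1) :
    ∫ y in Ioi (0:ℝ), y ^ a / ((1 + y) * (1 + t * y)) =
      -(π / sin (π * a)) * ((1 - t ^ (-a)) / (1 - t)) := by
  have h1t : 1 - t ≠ 0 := (sub_pos.2 ht1).ne'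
  -- `y ^ a / (1 + y)` is integrable at `∞` only for `a < 0`; for `a > 0` a factor `y` is
  -- moved into the partial fractions.
  rcases ha0.lt_or_gt with hneg | hpos
  · have hsplit : ∀ y ∈ Ioi (0:ℝ), y ^ a / ((1 + y) * (1 + t * y)) =
        (1 - t)⁻¹ * (y ^ (a + 1 - 1) / (1 + 1 * y)) -
          ((1 - t)⁻¹ * t) * (y ^ (a + 1 - 1) / (1 + t * y)) := by
      intro y (hy : 0 < y)
      rw [add_sub_cancel_right]
      field_simp
      ring
    rw [setIntegral_congr_fun measurableSet_Ioi hsplit,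
      integral_sub_rpow_div_one_add_mul (by linarith [neg_lt_of_abs_lt ha1]) (by linarith)
        one_pos ht0,
      Real.one_rpow, mul_one, mul_add_one, Real.sin_add_pi, mul_assoc (1 - t)⁻¹ t,
      ← Real.rpow_one_add' ht0.le (by linarith [neg_lt_of_abs_lt ha1]),
      show 1 + -(a + 1) = -a by ring]
    field_simp
  · have hsplit : ∀ y ∈ Ioi (0:ℝ), y ^ a / ((1 + y) * (1 + t * y)) =
        (1 - t)⁻¹ * (y ^ (a - 1) / (1 + t * y)) - (1 - t)⁻¹ * (y ^ (a - 1) / (1 + 1 * y)) := by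
      intro y (hy : 0 < y)
      rw [Real.rpow_sub_one hy.ne']
      field_simp
      ring
    rw [setIntegral_congr_fun measurableSet_Ioi hsplit,
      integral_sub_rpow_div_one_add_mul hpos (lt_of_abs_lt ha1) ht0 one_pos, Real.one_rpow]
    field_simp
    ring

theorem integrableOn_Ioo_rpow {c : ℝ} (hc : -1 < c) : IntegrableOn (fun t : ℝ => t ^ c) (Ioo 0 1) :=
  (intervalIntegral.intervalIntegrable_rpow' hc).1.mono_set Ioo_subset_Ioc_self

theorem integral_Ioo_rpow {c : ℝ} (hc : -1 < c) : ∫ t in Ioo (0:ℝ) 1, t ^ c = 1 / (c + 1) := by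
  rw [← integral_Ioc_eq_integral_Ioo, ← intervalIntegral.integral_of_le zero_le_one,
    integral_rpow (Or.inl hc), Real.one_rpow, Real.zero_rpow (by linarith), sub_zero]

theorem abs_one_sub_rpow_le {r t : ℝ} (hr : |r| ≤ 1) (ht0 : 0 < t) (ht1 : t ≤ 1) :
    |1 - t ^ r| ≤ t ^ (-|r|) * (1 - t) := by
  rcases le_or_gt 0 r with hr0 | hr0
  · have h1 : t ≤ t ^ r := by
      simpa using Real.rpow_le_rpow_of_exponent_ge ht0 ht1 (abs_le.1 hr).2
    have h2 : 1 ≤ t ^ (-r) := Real.one_le_rpow_of_pos_of_le_one_of_nonpos ht0 ht1 (by linarith)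
    rw [abs_of_nonneg hr0, abs_of_nonneg (by linarith [Real.rpow_le_one ht0.le ht1 hr0])]
    nlinarith
  · have h1 : 1 ≤ t ^ r := Real.one_le_rpow_of_pos_of_le_one_of_nonpos ht0 ht1 hr0.le
    have h2 : t ^ r * t ≤ 1 := by
      rw [← Real.rpow_add_one ht0.ne']
      exact Real.rpow_le_one ht0.le ht1 (by linarith [(abs_le.1 hr).1])
    rw [abs_of_neg hr0, neg_neg, abs_of_nonpos (by linarith)]
    nlinarith

theorem integrableOn_one_sub_rpow_div_one_sub {r : ℝ} (hr : |r| < 1) :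
    IntegrableOn (fun t : ℝ => (1 - t ^ r) / (1 - t)) (Ioo 0 1) := by
  refine (integrableOn_Ioo_rpow (by linarith : -1 < -|r|)).mono'
    (by fun_prop : Measurable _).aestronglyMeasurable ?_
  filter_upwards [ae_restrict_mem measurableSet_Ioo] with t ⟨ht0, ht1⟩
  rw [Real.norm_eq_abs, abs_div, abs_of_pos (sub_pos.2 ht1), div_le_iff₀ (sub_pos.2 ht1)]
  exact abs_one_sub_rpow_le hr.le ht0 ht1.le

theorem integral_norm_rpow_sub_rpow_le {r : ℝ} (hr : |r| < 1) (j : ℕ) :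
    ∫ t in Ioo (0:ℝ) 1, ‖t ^ (j:ℝ) - t ^ ((j:ℝ) + r)‖ ≤ 1 / |j + (1 - |r|)| ^ (2:ℝ) := by
  have hr' := abs_lt.1 hr
  have hc : -1 < (j:ℝ) - |r| := by linarith
  have hdom : ∀ t ∈ Ioo (0:ℝ) 1,
      ‖t ^ (j:ℝ) - t ^ ((j:ℝ) + r)‖ ≤ t ^ ((j:ℝ) - |r|) - t ^ ((j:ℝ) - |r| + 1) := by
    intro t ⟨ht0, ht1⟩
    calc ‖t ^ (j:ℝ) - t ^ ((j:ℝ) + r)‖ = t ^ (j:ℝ) * |1 - t ^ r| := by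
          rw [Real.rpow_add ht0, ← mul_one_sub, Real.norm_eq_abs, abs_mul,
            abs_of_nonneg (Real.rpow_nonneg ht0.le _)]
      _ ≤ t ^ (j:ℝ) * (t ^ (-|r|) * (1 - t)) := by
          gcongr; exact abs_one_sub_rpow_le hr.le ht0 ht1.le
      _ = t ^ ((j:ℝ) - |r|) - t ^ ((j:ℝ) - |r| + 1) := by
          rw [Real.rpow_add_one ht0.ne', sub_eq_add_neg (j:ℝ), Real.rpow_add ht0]
          ring
  have hpos : 0 < (j:ℝ) + (1 - |r|) := by linarith
  calc ∫ t in Ioo (0:ℝ) 1, ‖t ^ (j:ℝ) - t ^ ((j:ℝ) + r)‖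
      ≤ ∫ t in Ioo (0:ℝ) 1, (t ^ ((j:ℝ) - |r|) - t ^ ((j:ℝ) - |r| + 1)) :=
        setIntegral_mono_on
          ((integrableOn_Ioo_rpow (by linarith)).sub (integrableOn_Ioo_rpow (by linarith))).norm
          ((integrableOn_Ioo_rpow hc).sub (integrableOn_Ioo_rpow (by linarith)))
          measurableSet_Ioo hdom
    _ = 1 / (((j:ℝ) + (1 - |r|)) * ((j:ℝ) + (1 - |r|) + 1)) := by
        rw [integral_sub (integrableOn_Ioo_rpow hc) (integrableOn_Ioo_rpow (by linarith)),
          integral_Ioo_rpow hc, integral_Ioo_rpow (by linarith)]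
        have h1 : (j:ℝ) - |r| + 1 ≠ 0 := by linarith
        have h2 : (j:ℝ) - |r| + 1 + 1 ≠ 0 := by linarith
        field_simp
        ring
    _ ≤ 1 / |j + (1 - |r|)| ^ (2:ℝ) := by
        rw [abs_of_pos hpos, Real.rpow_two, sq]
        gcongr
        all_goals linarith [abs_nonneg r]

theorem integral_one_sub_rpow_div_one_sub {r : ℝ} (hr : |r| < 1) :
    ∫ t in Ioo (0:ℝ) 1, (1 - t ^ r) / (1 - t) =
      ∑' j : ℕ, (1 / ((j:ℝ) + 1) - 1 / (((j:ℝ) + 1) + r)) := by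
  have hexp : ∀ j : ℕ, -1 < (j:ℝ) := fun j => by linarith
  have hexp' : ∀ j : ℕ, -1 < (j:ℝ) + r := fun j => by linarith [(abs_lt.1 hr).1]
  have hint : ∀ j : ℕ, IntegrableOn (fun t : ℝ => t ^ (j:ℝ) - t ^ ((j:ℝ) + r)) (Ioo 0 1) :=
    fun j => (integrableOn_Ioo_rpow (hexp j)).sub (integrableOn_Ioo_rpow (hexp' j))
  have hsummable : Summable fun j : ℕ => ∫ t in Ioo (0:ℝ) 1, ‖t ^ (j:ℝ) - t ^ ((j:ℝ) + r)‖ :=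
    ((Real.summable_one_div_nat_add_rpow _ 2).2 one_lt_two).of_nonneg_of_le
      (fun j => integral_nonneg fun t => norm_nonneg _) (integral_norm_rpow_sub_rpow_le hr)
  have hgeom : ∀ t ∈ Ioo (0:ℝ) 1,
      (1 - t ^ r) / (1 - t) = ∑' j : ℕ, (t ^ (j:ℝ) - t ^ ((j:ℝ) + r)) := by
    intro t ⟨ht0, ht1⟩
    simp_rw [Real.rpow_add ht0, Real.rpow_natCast, ← mul_one_sub]
    rw [tsum_mul_right, tsum_geometric_of_lt_one ht0.le ht1, div_eq_inv_mul]
  rw [setIntegral_congr_fun measurableSet_Ioo hgeom,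
    ← integral_tsum_of_summable_integral_norm hint hsummable]
  refine tsum_congr fun j => ?_
  rw [integral_sub (integrableOn_Ioo_rpow (hexp j)) (integrableOn_Ioo_rpow (hexp' j)),
    integral_Ioo_rpow (hexp j), integral_Ioo_rpow (hexp' j), add_right_comm]

theorem integral_inv_one_add_mul {y : ℝ} (hy : 0 < y) :
    ∫ t in Ioo (0:ℝ) 1, (1 + t * y)⁻¹ = log (1 + y) / y := by
  rw [← integral_Ioc_eq_integral_Ioo, ← intervalIntegral.integral_of_le zero_le_one]
  simp only [mul_comm _ y]
  rw [intervalIntegral.integral_comp_add_mul (fun u : ℝ => u⁻¹) hy.ne', mul_zero, add_zero, mul_one,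
    integral_inv_of_pos one_pos (by linarith), div_one, smul_eq_mul, inv_mul_eq_div]

theorem integral_rpow_mul_log_one_add_div_eq_integral_integral {a : ℝ} (ha0 : a ≠ 0)
    (ha1 : |a| < 1) :
    ∫ y in Ioi (0:ℝ), y ^ a * log (1 + y) / (y * (1 + y)) =
      ∫ t in Ioo (0:ℝ) 1, ∫ y in Ioi (0:ℝ), y ^ a / ((1 + y) * (1 + t * y)) := by
  set F : ℝ → ℝ → ℝ := fun t y => y ^ a / ((1 + y) * (1 + t * y))
  have hF_nonneg : ∀ t ∈ Ioo (0:ℝ) 1, ∀ y ∈ Ioi (0:ℝ), 0 ≤ F t y :=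
    fun t ht y (hy : 0 < y) => by have := ht.1; positivity
  have hmeas : AEStronglyMeasurable (Function.uncurry F)
      ((volume.restrict (Ioo (0:ℝ) 1)).prod (volume.restrict (Ioi 0))) := by
    rw [Measure.prod_restrict]
    refine ContinuousOn.aestronglyMeasurable (fun p hp => ?_)
      (measurableSet_Ioo.prod measurableSet_Ioi)
    have hp1 : 0 < p.1 := hp.1.1
    have hp2 : 0 < p.2 := hp.2
    refine ContinuousAt.continuousWithinAt (ContinuousAt.div ?_ (by fun_prop) (by positivity))
    exact (Real.continuousAt_rpow_const _ _ (Or.inl hp2.ne')).comp continuousAt_snd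
  have hint : Integrable (Function.uncurry F)
      ((volume.restrict (Ioo (0:ℝ) 1)).prod (volume.restrict (Ioi 0))) := by
    refine (integrable_prod_iff hmeas).2 ⟨?_, ?_⟩
    · filter_upwards [ae_restrict_mem measurableSet_Ioo] with t ht
      exact integrableOn_rpow_div_one_add_mul_one_add_mul ha1 ht.1
    · refine ((integrableOn_one_sub_rpow_div_one_sub (r := -a) (by rwa [abs_neg])).const_mul
        (-(π / sin (π * a)))).congr ?_
      filter_upwards [ae_restrict_mem measurableSet_Ioo] with t ht
      rw [← integral_rpow_div_one_add_mul_one_add_mul ha0 ha1 ht.1 ht.2]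
      exact setIntegral_congr_fun measurableSet_Ioi fun y hy =>
        (Real.norm_of_nonneg (hF_nonneg t ht y hy)).symm
  rw [integral_integral_swap hint]
  refine setIntegral_congr_fun measurableSet_Ioi fun y (hy : 0 < y) => ?_
  simp only [F, div_mul_eq_div_div _ (1 + y), div_eq_mul_inv (_ / _)]
  rw [integral_const_mul, integral_inv_one_add_mul hy, mul_comm y]
  field_simp

end

theorem stmt11 (a : ℝ) (ha0 : a ≠ 0) (ha1 : |a| < 1) :
    (∫ y in Set.Ioi (0:ℝ), y ^ a * (-(Real.log (1+y))) / (y*(1+y))) =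
    (Real.pi / Real.sin (a * Real.pi)) *
      ∑' j : ℕ, (1/((j:ℝ)+1) - 1/(((j:ℝ)+1) - a)) := by
  simp only [mul_neg, neg_div, integral_neg]
  rw [integral_rpow_mul_log_one_add_div_eq_integral_integral ha0 ha1,
    setIntegral_congr_fun measurableSet_Ioo fun t ht =>
      integral_rpow_div_one_add_mul_one_add_mul ha0 ha1 ht.1 ht.2,
    integral_const_mul, integral_one_sub_rpow_div_one_sub (by rwa [abs_neg]), mul_comm a]
  simp only [← sub_eq_add_neg, neg_mul, neg_neg]
end

section
/- Let p ∈ ℕ (possibly 0) and a, b ∈ ℝ with a > 0 and b > 0. Then η(2p+1) = (b^{2p+1}/(π·(2p)!)) · Im( ∫_{−∞}^{∞} x^{2p} · Log(1 − e^{ax})/(1 + e^{bx}) dx ), where Log denotes the principal branch of the complex logarithm. -/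
open MeasureTheory Filter

/-! For `x ≤ 0` the number `1 - e^{ax}` lies in `[0, 1)`, so its principal logarithm is real,
while for `x > 0` it is negative and its logarithm has imaginary part `π`. Hence the imaginary
part of the integral is `π ∫_0^∞ x^{2p} / (1 + e^{bx}) dx`. Expanding
`1 / (1 + e^s) = ∑ (-1)^n e^{-(n+1)s}` and integrating termwise against `s^t` gives
`∫_0^∞ s^t / (1 + e^s) ds = t! η(t+1)` for `t ≥ 1`; for `t = 0` the series does not converge
absolutely and `-log (1 + e^{-s})` is used as an antiderivative instead.

Taking the imaginary part inside the integral requires the complex integrand to be integrable.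
Its only delicate point is the logarithmic singularity at `x = 0`, controlled by
`-log (1 - e^{-y}) ≤ 2 y^{-1/2} e^{-y/2}`. -/

open Real Set MeasureTheory
open scoped Nat

lemma integrableOn_pow_mul_exp_neg_mul (t : ℕ) {c : ℝ} (hc : 0 < c) :
    IntegrableOn (fun x : ℝ => x ^ t * exp (-(c * x))) (Ioi 0) := by
  refine (integrableOn_rpow_mul_exp_neg_mul_rpow (s := t) (p := 1)
    (by linarith [t.cast_nonneg (α := ℝ)]) one_pos hc).congr_fun (fun x _ => ?_) measurableSet_Ioi
  simp [rpow_natCast]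

lemma integral_pow_mul_exp_neg_mul (t : ℕ) {c : ℝ} (hc : 0 < c) :
    ∫ x in Ioi 0, x ^ t * exp (-(c * x)) = t ! / c ^ (t + 1) := by
  have h := integral_rpow_mul_exp_neg_mul_Ioi (a := t + 1) (by positivity) hc
  rw [Gamma_nat_eq_factorial, one_div, inv_rpow hc.le, ← Nat.cast_succ, rpow_natCast] at h
  simpa only [Nat.cast_succ, add_sub_cancel_right, rpow_natCast, div_eq_inv_mul] using h

lemma inv_one_add_exp_le_exp_neg (y : ℝ) : (1 + exp y)⁻¹ ≤ exp (-y) := by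
  rw [exp_neg]
  exact inv_anti₀ (exp_pos y) (by linarith)

lemma hasSum_neg_one_pow_mul_exp {s : ℝ} (hs : 0 < s) :
    HasSum (fun n : ℕ => (-1) ^ n * exp (-((n + 1) * s))) (1 / (1 + exp s)) := by
  have hq : ‖-exp (-s)‖ < 1 := by simpa [abs_of_pos (exp_pos _)] using hs
  have h := (hasSum_geometric_of_norm_lt_one hq).mul_left (exp (-s))
  have hterm (n : ℕ) : (-1) ^ n * exp (-((n + 1) * s)) = exp (-s) * (-exp (-s)) ^ n := by
    have hexp : exp (-((n + 1) * s)) = exp (-s) * exp (-s) ^ n := by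
      rw [← exp_nat_mul, ← exp_add]
      ring_nf
    rw [hexp, neg_pow]
    ring
  have hsum : 1 / (1 + exp s) = exp (-s) * (1 - -exp (-s))⁻¹ := by
    rw [sub_neg_eq_add, exp_neg]
    field_simp
    ring
  rw [funext hterm, hsum]
  exact h

lemma integral_one_div_one_add_exp : ∫ s in Ioi (0 : ℝ), 1 / (1 + exp s) = log 2 := by
  have hderiv (s : ℝ) : HasDerivAt (fun s => -log (1 + exp (-s))) (1 / (1 + exp s)) s := by
    refine (((hasDerivAt_neg s).exp.const_add 1).log (by positivity)).neg.congr_deriv ?_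
    rw [exp_neg]
    field_simp
    ring
  have hlim : Tendsto (fun s : ℝ => -log (1 + exp (-s))) atTop (nhds 0) := by
    simpa using ((tendsto_exp_neg_atTop_nhds_zero.const_add 1).log (by norm_num)).neg
  have hint : IntegrableOn (fun s : ℝ => 1 / (1 + exp s)) (Ioi 0) := by
    refine (exp_neg_integrableOn_Ioi 0 one_pos).mono'
      (continuous_const.div (by fun_prop) fun s => by positivity).aestronglyMeasurable ?_
    filter_upwards with s
    rw [norm_of_nonneg (by positivity), neg_one_mul, one_div]
    exact inv_one_add_exp_le_exp_neg s
  rw [integral_Ioi_of_hasDerivAt_of_tendsto' (fun s _ => hderiv s) hint hlim]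
  norm_num

lemma integral_pow_div_one_add_exp_of_pos {t : ℕ} (ht : 0 < t) :
    ∫ s in Ioi (0 : ℝ), s ^ t / (1 + exp s)
      = t ! * ∑' n : ℕ, (-1 : ℝ) ^ n / ((n : ℝ) + 1) ^ (t + 1) := by
  set F : ℕ → ℝ → ℝ := fun n s => (-1) ^ n * (s ^ t * exp (-((n + 1) * s)))
  have hF_int (n : ℕ) : IntegrableOn (F n) (Ioi 0) :=
    (integrableOn_pow_mul_exp_neg_mul t n.cast_add_one_pos).const_mul _
  have hF_integral (n : ℕ) :
      ∫ s in Ioi 0, F n s = t ! * ((-1) ^ n / ((n : ℝ) + 1) ^ (t + 1)) := by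
    rw [integral_const_mul, integral_pow_mul_exp_neg_mul t n.cast_add_one_pos]
    ring
  have hF_norm (n : ℕ) : ∫ s in Ioi 0, ‖F n s‖ = t ! * (1 / ((n : ℝ) + 1) ^ (t + 1)) := by
    rw [mul_one_div, ← integral_pow_mul_exp_neg_mul t n.cast_add_one_pos]
    refine setIntegral_congr_fun measurableSet_Ioi fun s (hs : 0 < s) => ?_
    simp only [F, norm_mul, norm_pow, norm_neg, norm_one, one_pow, one_mul,
      norm_of_nonneg hs.le, norm_of_nonneg (exp_pos _).le]
  have hF_sum : Summable fun n => ∫ s in Ioi 0, ‖F n s‖ := by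
    simp_rw [hF_norm]
    refine Summable.mul_left _ ?_
    exact_mod_cast (summable_nat_add_iff 1).mpr
      (Real.summable_one_div_nat_pow.mpr (by omega : 1 < t + 1))
  have hF_tsum : ∀ s ∈ Ioi (0 : ℝ), ∑' n, F n s = s ^ t / (1 + exp s) := fun s hs => by
    simp_rw [F, mul_left_comm _ (s ^ t), tsum_mul_left,
      (hasSum_neg_one_pow_mul_exp hs).tsum_eq, mul_one_div]
  rw [← setIntegral_congr_fun measurableSet_Ioi hF_tsum,
    ← integral_tsum_of_summable_integral_norm hF_int hF_sum, ← tsum_mul_left]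
  simp_rw [hF_integral]

lemma integral_pow_div_one_add_exp (t : ℕ) :
    ∫ s in Ioi (0 : ℝ), s ^ t / (1 + exp s) = t ! * dEta (t + 1) := by
  rcases t.eq_zero_or_pos with rfl | ht
  · simpa [dEta] using integral_one_div_one_add_exp
  · rw [integral_pow_div_one_add_exp_of_pos ht, dEta, if_neg (by omega), if_neg (by omega)]

lemma integral_pow_div_one_add_exp_mul (t : ℕ) {b : ℝ} (hb : 0 < b) :
    ∫ x in Ioi (0 : ℝ), x ^ t / (1 + exp (b * x)) = t ! * dEta (t + 1) / b ^ (t + 1) := by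
  have h := integral_comp_mul_left_Ioi (fun s => s ^ t / (1 + exp s)) 0 hb
  rw [mul_zero, integral_pow_div_one_add_exp, smul_eq_mul] at h
  simp_rw [mul_pow, mul_div_assoc] at h
  rw [integral_const_mul] at h
  rw [eq_div_iff (by positivity)]
  field_simp at h ⊢
  linear_combination h

lemma neg_log_le_mul_rpow {u : ℝ} (hu0 : 0 < u) (hu1 : u ≤ 1) :
    -log u ≤ 2 * (1 - u) * u ^ (-(1 / 2) : ℝ) := by
  have hlog := log_le_sub_one_of_pos (rpow_pos_of_pos hu0 (-(1 / 2)))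
  rw [log_rpow hu0] at hlog
  have hmul : u * u ^ (-(1 / 2) : ℝ) ≤ 1 := by
    rw [← rpow_one_add' hu0.le (by norm_num)]
    exact rpow_le_one hu0.le hu1 (by norm_num)
  nlinarith

lemma mul_exp_neg_le_one_sub_exp_neg (y : ℝ) : y * exp (-y) ≤ 1 - exp (-y) := by
  have hexp : exp (-y) * exp y = 1 := by rw [← exp_add, neg_add_cancel, exp_zero]
  nlinarith [mul_le_mul_of_nonneg_left (add_one_le_exp y) (exp_pos (-y)).le]

lemma neg_log_one_sub_exp_neg_nonneg {y : ℝ} (hy : 0 ≤ y) : 0 ≤ -log (1 - exp (-y)) :=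
  neg_nonneg.mpr (log_nonpos (by linarith [exp_le_one_iff.mpr (neg_nonpos.mpr hy)])
    (by linarith [exp_pos (-y)]))

lemma neg_log_one_sub_exp_neg_le {y : ℝ} (hy : 0 < y) :
    -log (1 - exp (-y)) ≤ 2 * y ^ (-(1 / 2) : ℝ) * exp (-(y / 2)) := by
  have hu := mul_exp_neg_le_one_sub_exp_neg y
  have hu0 : 0 < y * exp (-y) := by positivity
  have hrpow : (1 - exp (-y)) ^ (-(1 / 2) : ℝ) ≤ y ^ (-(1 / 2) : ℝ) * exp (y / 2) := by
    calc (1 - exp (-y)) ^ (-(1 / 2) : ℝ) ≤ (y * exp (-y)) ^ (-(1 / 2) : ℝ) :=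
          rpow_le_rpow_of_nonpos hu0 hu (by norm_num)
      _ = y ^ (-(1 / 2) : ℝ) * exp (y / 2) := by
          rw [mul_rpow hy.le (exp_pos _).le, ← exp_mul]
          ring_nf
  calc -log (1 - exp (-y)) ≤ 2 * (1 - (1 - exp (-y))) * (1 - exp (-y)) ^ (-(1 / 2) : ℝ) :=
        neg_log_le_mul_rpow (hu0.trans_le hu) (by linarith [exp_pos (-y)])
    _ ≤ 2 * exp (-y) * (y ^ (-(1 / 2) : ℝ) * exp (y / 2)) := by
        rw [sub_sub_cancel]
        gcongr
    _ = 2 * y ^ (-(1 / 2) : ℝ) * exp (-(y / 2)) := by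
        have hexp : exp (-y) * exp (y / 2) = exp (-(y / 2)) := by rw [← exp_add]; ring_nf
        linear_combination (2 * y ^ (-(1 / 2) : ℝ)) * hexp

lemma integrableOn_pow_mul_neg_log_one_sub_exp (t : ℕ) {c : ℝ} (hc : 0 < c) :
    IntegrableOn (fun x : ℝ => x ^ t * -log (1 - exp (-(c * x)))) (Ioi 0) := by
  have hmaj := (integrableOn_rpow_mul_exp_neg_mul_rpow (s := t + -(1 / 2)) (p := 1)
    (by linarith [t.cast_nonneg (α := ℝ)]) one_pos (half_pos hc)).const_mul
    (2 * c ^ (-(1 / 2) : ℝ))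
  refine hmaj.mono' (by fun_prop) ?_
  filter_upwards [self_mem_ae_restrict measurableSet_Ioi] with x (hx : 0 < x)
  have hcx : 0 < c * x := mul_pos hc hx
  rw [norm_of_nonneg (mul_nonneg (by positivity) (neg_log_one_sub_exp_neg_nonneg hcx.le))]
  calc x ^ t * -log (1 - exp (-(c * x)))
      ≤ x ^ t * (2 * (c * x) ^ (-(1 / 2) : ℝ) * exp (-(c * x / 2))) := by
        gcongr
        exact neg_log_one_sub_exp_neg_le hcx
    _ = 2 * c ^ (-(1 / 2) : ℝ) * (x ^ ((t : ℝ) + -(1 / 2)) * exp (-(c / 2) * x ^ (1 : ℝ))) := by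
        rw [mul_rpow hc.le hx.le, rpow_add hx, rpow_natCast, rpow_one]
        ring_nf

lemma log_exp_sub_one (y : ℝ) : log (exp y - 1) = y + log (1 - exp (-y)) := by
  rcases eq_or_ne y 0 with rfl | hy
  · simp
  have hy' : 1 - exp (-y) ≠ 0 := by
    rw [sub_ne_zero, ne_comm, Ne, exp_eq_one_iff, neg_eq_zero]
    exact hy
  have hfactor : exp y - 1 = exp y * (1 - exp (-y)) := by
    rw [mul_sub, mul_one, ← exp_add, add_neg_cancel, exp_zero]
  rw [hfactor, log_mul (exp_pos y).ne' hy', log_exp]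

lemma Complex.norm_log_le (z : ℂ) : ‖Complex.log z‖ ≤ |Real.log ‖z‖| + π := by
  refine (Complex.norm_le_abs_re_add_abs_im _).trans ?_
  rw [Complex.log_re, Complex.log_im]
  linarith [Complex.abs_arg_le_pi z]

noncomputable def etaIntegrand (t : ℕ) (a b x : ℝ) : ℂ :=
  (x : ℂ) ^ t * Complex.log (1 - (exp (a * x) : ℂ)) / (1 + (exp (b * x) : ℂ))

section etaIntegrand

variable (t : ℕ) {a b : ℝ}

lemma etaIntegrand_eq_ofReal_mul_log (x : ℝ) :
    etaIntegrand t a b x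
      = ((x ^ t / (1 + exp (b * x)) : ℝ) : ℂ) * Complex.log ((1 - exp (a * x) : ℝ) : ℂ) := by
  unfold etaIntegrand
  push_cast
  ring

lemma im_etaIntegrand (ha : 0 < a) (x : ℝ) :
    (etaIntegrand t a b x).im = (Ioi 0).indicator (fun x => π * (x ^ t / (1 + exp (b * x)))) x := by
  rw [etaIntegrand_eq_ofReal_mul_log, Complex.im_ofReal_mul, Complex.log_im]
  rcases lt_or_ge 0 x with hx | hx
  · have hneg : 1 - exp (a * x) < 0 := by linarith [one_lt_exp_iff.mpr (mul_pos ha hx)]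
    rw [Complex.arg_ofReal_of_neg hneg, indicator_of_mem (mem_Ioi.mpr hx), mul_comm]
  · have hnonneg : 0 ≤ 1 - exp (a * x) := by
      linarith [exp_le_one_iff.mpr (mul_nonpos_of_nonneg_of_nonpos ha.le hx)]
    rw [Complex.arg_ofReal_of_nonneg hnonneg, indicator_of_notMem (by simpa using hx), mul_zero]

lemma norm_etaIntegrand_le_of_neg (ha : 0 < a) {x : ℝ} (hx : x < 0) :
    ‖etaIntegrand t a b x‖ ≤ (-x) ^ t * -log (1 - exp (-(a * -x))) := by
  have hax : a * x = -(a * -x) := by ring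
  have hlog : log (1 - exp (a * x)) ≤ 0 := by
    rw [hax]
    exact neg_nonneg.mp (neg_log_one_sub_exp_neg_nonneg (by nlinarith))
  have hpos : 0 ≤ 1 - exp (a * x) := by
    linarith [exp_le_one_iff.mpr (mul_nonpos_of_nonneg_of_nonpos ha.le hx.le)]
  rw [etaIntegrand_eq_ofReal_mul_log, ← Complex.ofReal_log hpos, norm_mul, Complex.norm_real,
    Complex.norm_real, norm_div, norm_pow, norm_eq_abs x, abs_of_neg hx, norm_of_nonpos hlog,
    ← hax, norm_of_nonneg (by positivity)]
  gcongr
  · exact neg_nonneg.mpr hlog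
  · exact div_le_self (pow_nonneg (neg_nonneg.mpr hx.le) t)
      (le_add_of_nonneg_right (exp_pos _).le)

lemma norm_etaIntegrand_le_of_pos (ha : 0 < a) {x : ℝ} (hx : 0 < x) :
    ‖etaIntegrand t a b x‖
      ≤ x ^ t * -log (1 - exp (-(a * x))) + a * (x ^ (t + 1) * exp (-(b * x)))
        + π * (x ^ t * exp (-(b * x))) := by
  have hax : 0 < a * x := mul_pos ha hx
  set L := -log (1 - exp (-(a * x))) with hL_def
  have hL : 0 ≤ L := neg_log_one_sub_exp_neg_nonneg hax.le
  have hnorm : ‖((1 - exp (a * x) : ℝ) : ℂ)‖ = exp (a * x) - 1 := by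
    rw [Complex.norm_real, norm_of_nonpos (by linarith [one_lt_exp_iff.mpr hax]), neg_sub]
  have hlog : ‖Complex.log ((1 - exp (a * x) : ℝ) : ℂ)‖ ≤ a * x + L + π := by
    refine (Complex.norm_log_le _).trans ?_
    rw [hnorm, log_exp_sub_one]
    have habs : |a * x + log (1 - exp (-(a * x)))| ≤ a * x + L :=
      abs_le.mpr ⟨by linarith, by linarith⟩
    linarith
  have hfermi : x ^ t / (1 + exp (b * x)) ≤ x ^ t * exp (-(b * x)) := by
    rw [div_eq_mul_inv]
    gcongr
    exact inv_one_add_exp_le_exp_neg _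
  rw [etaIntegrand_eq_ofReal_mul_log, norm_mul, Complex.norm_real, norm_of_nonneg (by positivity)]
  calc x ^ t / (1 + exp (b * x)) * ‖Complex.log ((1 - exp (a * x) : ℝ) : ℂ)‖
      ≤ x ^ t / (1 + exp (b * x)) * L + x ^ t / (1 + exp (b * x)) * (a * x + π) := by
        rw [← mul_add]
        gcongr
        linarith
    _ ≤ x ^ t * L + x ^ t * exp (-(b * x)) * (a * x + π) := by
        have hdiv : x ^ t / (1 + exp (b * x)) ≤ x ^ t :=
          div_le_self (by positivity) (le_add_of_nonneg_right (exp_pos _).le)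
        gcongr
    _ = _ := by ring

lemma integrable_etaIntegrand (ha : 0 < a) (hb : 0 < b) :
    Integrable (etaIntegrand t a b) := by
  have hmeas : AEStronglyMeasurable (etaIntegrand t a b) :=
    Measurable.aestronglyMeasurable (by unfold etaIntegrand; fun_prop)
  have hneg : IntegrableOn (etaIntegrand t a b) (Iio 0) := by
    have hmaj : IntegrableOn (fun x : ℝ => (-x) ^ t * -log (1 - exp (-(a * -x)))) (Iio 0) :=
      IntegrableOn.comp_neg_Iio (μ := volume) (c := (0 : ℝ))
        (by rw [neg_zero]; exact integrableOn_pow_mul_neg_log_one_sub_exp t ha)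
    refine hmaj.mono' hmeas.restrict ?_
    filter_upwards [self_mem_ae_restrict measurableSet_Iio] with x (hx : x < 0)
    exact norm_etaIntegrand_le_of_neg t ha hx
  have hpos : IntegrableOn (etaIntegrand t a b) (Ioi 0) := by
    have hmaj := ((integrableOn_pow_mul_neg_log_one_sub_exp t ha).add
      ((integrableOn_pow_mul_exp_neg_mul (t + 1) hb).const_mul a)).add
      ((integrableOn_pow_mul_exp_neg_mul t hb).const_mul π)
    refine hmaj.mono' hmeas.restrict ?_
    filter_upwards [self_mem_ae_restrict measurableSet_Ioi] with x (hx : 0 < x)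
    exact norm_etaIntegrand_le_of_pos t ha hx
  rw [← integrableOn_univ, ← Iio_union_Ici]
  exact hneg.union (Iff.mpr integrableOn_Ici_iff_integrableOn_Ioi hpos)

end etaIntegrand

theorem stmt14 (p : ℕ) (a b : ℝ) (ha : 0 < a) (hb : 0 < b) :
    dEta (2*p+1) =
      (b^(2*p+1) / (Real.pi * ((2*p).factorial : ℝ))) *
        (∫ x : ℝ, (x:ℂ)^(2*p) * Complex.log (1 - (Real.exp (a*x) : ℂ)) /
          (1 + (Real.exp (b*x) : ℂ))).im := by
  change _ = _ * (∫ x, etaIntegrand (2 * p) a b x).im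
  rw [← RCLike.im_to_complex, ← integral_im (integrable_etaIntegrand (2 * p) ha hb)]
  simp only [RCLike.im_to_complex, im_etaIntegrand _ ha]
  rw [integral_indicator measurableSet_Ioi, integral_const_mul,
    integral_pow_div_one_add_exp_mul _ hb]
  field_simp
end

section
/- Let p ∈ ℕ (possibly 0), t ≥ 1 an integer, and q > 0 a real number. Then ∫_{0}^{1} (log x)^p · ( ∑_{k=1}^{∞} (−1)^k x^{qk}/k^t ) / x dx = ((−1)^{p+1}·p! / q^{p+1})·η(p+t+1), where log is the real natural logarithm (the series is the polylogarithm Li_t(−x^q) for 0 < x < 1). -/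
open MeasureTheory Filter

/-
Substituting `x = e^{-s}` turns `∫₀¹ (log x)^p x^a dx / x` into `(-1)^p ∫₀^∞ s^p e^{-as} ds`,
i.e. `(-1)^p p! / a^{p+1}`, a Gamma integral. Expanding the polylogarithm as a power series in
`x^q`, the `k`-th term has exponent `a = q (k+1)` and coefficient `(-1)^{k+1}/(k+1)^t`, so the
absolute values of the termwise integrals are `p! / (q^{p+1} (k+1)^{p+t+1})`, which are summable
because `p + t + 1 ≥ 2`. Hence sum and integral may be exchanged, and the resulting series is
`η(p+t+1)` up to the factor `(-1)^{p+1} p! / q^{p+1}`.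
-/

open Real Set

theorem image_exp_neg_Ioi_zero : (fun s : ℝ => exp (-s)) '' Ioi 0 = Ioo 0 1 := by
  ext x
  constructor
  · rintro ⟨s, hs, rfl⟩
    exact ⟨exp_pos _, exp_lt_one_iff.mpr (neg_lt_zero.mpr hs)⟩
  · rintro ⟨hx0, hx1⟩
    exact ⟨-log x, neg_pos.mpr (log_neg hx0 hx1), by simp [exp_log hx0]⟩

theorem hasDerivAt_exp_neg (s : ℝ) : HasDerivAt (fun s : ℝ => exp (-s)) (-exp (-s)) s := by
  simpa using (hasDerivAt_neg s).exp

theorem integral_Ioo_zero_one_eq_integral_exp_neg (g : ℝ → ℝ) :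
    ∫ x in Ioo 0 1, g x = ∫ s in Ioi 0, exp (-s) * g (exp (-s)) := by
  rw [← image_exp_neg_Ioi_zero, integral_image_eq_integral_abs_deriv_smul measurableSet_Ioi
    (fun s _ => (hasDerivAt_exp_neg s).hasDerivWithinAt)
    (exp_injective.comp neg_injective).injOn g]
  simp [abs_of_pos (exp_pos _)]

theorem integrableOn_Ioo_zero_one_iff_exp_neg (g : ℝ → ℝ) :
    IntegrableOn g (Ioo 0 1) ↔ IntegrableOn (fun s => exp (-s) * g (exp (-s))) (Ioi 0) := by
  rw [← image_exp_neg_Ioi_zero, integrableOn_image_iff_integrableOn_abs_deriv_smul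
    measurableSet_Ioi (fun s _ => (hasDerivAt_exp_neg s).hasDerivWithinAt)
    (exp_injective.comp neg_injective).injOn]
  simp [abs_of_pos (exp_pos _)]

theorem exp_neg_mul_log_pow_mul_rpow_div (p : ℕ) (a s : ℝ) :
    exp (-s) * (log (exp (-s)) ^ p * exp (-s) ^ a / exp (-s))
      = (-1) ^ p * (s ^ ((p + 1 : ℝ) - 1) * exp (-(a * s))) := by
  rw [log_exp, ← exp_mul, add_sub_cancel_right, rpow_natCast, neg_pow]
  field_simp

theorem integral_rpow_natCast_mul_exp_neg_mul_Ioi (p : ℕ) {a : ℝ} (ha : 0 < a) :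
    ∫ s in Ioi 0, s ^ ((p + 1 : ℝ) - 1) * exp (-(a * s)) = p.factorial / a ^ (p + 1) := by
  rw [integral_rpow_mul_exp_neg_mul_Ioi (by positivity) ha, Gamma_nat_eq_factorial,
    ← Nat.cast_add_one, rpow_natCast]
  ring

theorem integral_log_pow_mul_rpow_div (p : ℕ) {a : ℝ} (ha : 0 < a) :
    ∫ x in Ioo 0 1, log x ^ p * x ^ a / x = (-1) ^ p * p.factorial / a ^ (p + 1) := by
  simp only [integral_Ioo_zero_one_eq_integral_exp_neg, exp_neg_mul_log_pow_mul_rpow_div,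
    integral_const_mul, integral_rpow_natCast_mul_exp_neg_mul_Ioi p ha]
  ring

theorem integrableOn_log_pow_mul_rpow_div (p : ℕ) {a : ℝ} (ha : 0 < a) :
    IntegrableOn (fun x => log x ^ p * x ^ a / x) (Ioo 0 1) := by
  have hGamma : IntegrableOn (fun s => s ^ ((p + 1 : ℝ) - 1) * exp (-(a * s))) (Ioi 0) :=
    -- the integral of a non-integrable function is `0`
    .of_integral_ne_zero <| by
      rw [integral_rpow_natCast_mul_exp_neg_mul_Ioi p ha]
      positivity
  rw [integrableOn_Ioo_zero_one_iff_exp_neg]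
  simp only [exp_neg_mul_log_pow_mul_rpow_div]
  exact hGamma.const_mul _

theorem integral_abs_log_pow_mul_rpow_div (p : ℕ) {a : ℝ} (ha : 0 < a) :
    ∫ x in Ioo 0 1, |log x ^ p * x ^ a / x| = p.factorial / a ^ (p + 1) := by
  have habs : ∀ x ∈ Ioo (0 : ℝ) 1,
      |log x ^ p * x ^ a / x| = (-1) ^ p * (log x ^ p * x ^ a / x) := by
    rintro x ⟨hx0, hx1⟩
    rw [abs_div, abs_mul, abs_pow, abs_of_neg (log_neg hx0 hx1),
      abs_of_pos (rpow_pos_of_pos hx0 a), abs_of_pos hx0, neg_pow]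
    ring
  rw [setIntegral_congr_fun measurableSet_Ioo habs, integral_const_mul,
    integral_log_pow_mul_rpow_div p ha, ← mul_div_assoc, ← mul_assoc, ← mul_pow]
  simp

theorem integral_log_pow_mul_tsum_rpow_div (p : ℕ) {a c : ℕ → ℝ} (ha : ∀ k, 0 < a k)
    (hc : Summable fun k => |c k| / a k ^ (p + 1)) :
    ∫ x in Ioo 0 1, log x ^ p * (∑' k, c k * x ^ a k) / x
      = (-1) ^ p * p.factorial * ∑' k, c k / a k ^ (p + 1) := by
  set F : ℕ → ℝ → ℝ := fun k x => c k * (log x ^ p * x ^ a k / x)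
  have hF : (fun x => log x ^ p * (∑' k, c k * x ^ a k) / x) = fun x => ∑' k, F k x := by
    ext x
    rw [div_eq_mul_inv, ← tsum_mul_left, ← tsum_mul_right]
    exact tsum_congr fun k => by ring
  have hF_int : ∀ k, IntegrableOn (F k) (Ioo 0 1) :=
    fun k => (integrableOn_log_pow_mul_rpow_div p (ha k)).const_mul (c k)
  have hF_norm : ∀ k, ∫ x in Ioo 0 1, ‖F k x‖ = p.factorial * (|c k| / a k ^ (p + 1)) := by
    intro k
    simp only [F, Real.norm_eq_abs, abs_mul (c k), integral_const_mul,
      integral_abs_log_pow_mul_rpow_div p (ha k)]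
    ring
  rw [hF, ← integral_tsum_of_summable_integral_norm hF_int
    (by simpa only [hF_norm] using hc.mul_left _), ← tsum_mul_left]
  refine tsum_congr fun k => ?_
  rw [integral_const_mul, integral_log_pow_mul_rpow_div p (ha k)]
  ring

theorem summable_one_div_nat_add_one_pow {m : ℕ} (hm : 2 ≤ m) :
    Summable fun k : ℕ => 1 / ((k : ℝ) + 1) ^ m := by
  have h := (summable_nat_add_iff 1).mpr (Real.summable_one_div_nat_pow.mpr hm)
  simpa only [Nat.cast_add_one] using h

theorem dEta_of_two_le {s : ℕ} (hs : 2 ≤ s) :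
    dEta s = ∑' n : ℕ, (-1) ^ n / ((n : ℝ) + 1) ^ s := by
  rw [dEta, if_neg (by omega), if_neg (by omega)]

theorem stmt19 (p t : ℕ) (ht : 1 ≤ t) (q : ℝ) (hq : 0 < q) :
    (∫ x in Set.Ioo (0:ℝ) 1,
        (Real.log x)^p * (∑' k : ℕ, (-1:ℝ)^(k+1) * x ^ (q*((k:ℝ)+1)) / ((k:ℝ)+1)^t) / x) =
    ((-1:ℝ)^(p+1) * (p.factorial : ℝ) / q^(p+1)) * dEta (p+t+1) := by
  set c : ℕ → ℝ := fun k => (-1) ^ (k + 1) / ((k : ℝ) + 1) ^ t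
  set a : ℕ → ℝ := fun k => q * ((k : ℝ) + 1)
  have ha : ∀ k, 0 < a k := fun k => by positivity
  have hc_term : ∀ k, c k / a k ^ (p + 1)
      = -(1 / q ^ (p + 1)) * ((-1) ^ k / ((k : ℝ) + 1) ^ (p + t + 1)) := by
    intro k
    simp only [c, a, mul_pow]
    field_simp
    ring
  have hc : Summable fun k => |c k| / a k ^ (p + 1) := by
    have hzeta := summable_one_div_nat_add_one_pow (m := p + t + 1) (by omega)
    refine (hzeta.mul_left (1 / q ^ (p + 1))).congr fun k => ?_
    rw [← abs_of_pos (ha k), ← abs_pow, ← abs_div, hc_term]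
    simp [abs_div, abs_of_pos hq, abs_of_pos (Nat.cast_add_one_pos (α := ℝ) k)]
  simp only [mul_div_right_comm _ (_ ^ (q * _))]
  rw [integral_log_pow_mul_tsum_rpow_div p ha hc, tsum_congr hc_term, tsum_mul_left,
    dEta_of_two_le (by omega)]
  ring
end
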